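/- Let G be a graph having a component with at least two cycles, let t(G) be the number of tree components of G, and let Y(G) = { a ∈ E(G) : t(G \ a) > t(G) }. Then an edge e belongs to the core [G] of G if and only if e ∈ E(G) \ Y(G). -/

import Mathlib

/-!
For an edge set `X` write `excess X v = |E| - |V|` for the component of `v` in `(V, X)`; it is
at least `-1`, with equality exactly for tree components. Deleting an edge `e = u₁u₂` lowers
the excess of its component by one if `u₁, u₂` stay connected, and otherwise splits it into two
components whose excesses add up to one less. Hence the number of tree components grows
exactly when an end of `e` lies in a tree component of `G \ e`.

The kernel is the largest leafless edge set. If neither end of `e` lies in a tree component of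
`G \ e`, repeatedly deleting pendant edges other than `e` keeps it that way, so `e` survives in a
leafless edge set; the excess formulas then give `Δ ≥ 1` for its component. Conversely, if a
kernel edge `e` is a bridge, the kernel edges on either side form a subgraph in which every
vertex but the end of `e` has degree at least two, so by the handshake lemma that side has at
least as many edges as vertices and is not a tree.
-/

open scoped Classical

/-- A finite multigraph: loops and parallel edges allowed. -/
structure Multigraph where
  V : Type
  E : Type
  [fintypeV : Fintype V]
  [fintypeE : Fintype E]
  ends : E → Sym2 V

attribute [instance] Multigraph.fintypeV Multigraph.fintypeE

namespace Multigraph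

variable (G : Multigraph)

/-- Vertex support of an edge set: vertices incident to some edge of `X`. -/
noncomputable def supp (X : Finset G.E) : Finset G.V :=
  Finset.univ.filter (fun v => ∃ e ∈ X, v ∈ G.ends e)

/-- `Δ` of the subgraph induced by the edge set `X`. -/
noncomputable def delta (X : Finset G.E) : ℤ := (X.card : ℤ) - (G.supp X).card

/-- `Δ(G) = |E(G)| - |V(G)|`. -/
noncomputable def deltaG : ℤ := (Fintype.card G.E : ℤ) - (Fintype.card G.V : ℤ)

/-- Degree of `v` in the edge set `X`: loops count twice. -/
noncomputable def degIn (X : Finset G.E) (v : G.V) : ℕ :=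
  ∑ e ∈ X, (if G.ends e = s(v, v) then 2 else if v ∈ G.ends e then 1 else 0)

/-- `u` and `v` are joined by an edge of `X`. -/
def adjIn (X : Finset G.E) (u v : G.V) : Prop := ∃ e ∈ X, G.ends e = s(u, v)

/-- Reachability using only edges of `X`. -/
def reachIn (X : Finset G.E) : G.V → G.V → Prop :=
  Relation.ReflTransGen (G.adjIn X)

/-- The edge set `X` induces a connected subgraph. -/
def ConnSet (X : Finset G.E) : Prop :=
  X.Nonempty ∧ ∀ u ∈ G.supp X, ∀ v ∈ G.supp X, G.reachIn X u v

/-- Edges of the component of the subgraph `(V, X)` containing vertex `v`. -/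
noncomputable def compEdges (X : Finset G.E) (v : G.V) : Finset G.E :=
  X.filter (fun f => ∃ u ∈ G.ends f, G.reachIn X v u)

/-- Vertices of the component of `v` in the graph `(V, X)` (all vertices kept). -/
noncomputable def compVerts (X : Finset G.E) (v : G.V) : Finset G.V :=
  Finset.univ.filter (fun u => G.reachIn X v u)

/-- `C` is (the edge set of) a cycle: connected, every vertex of degree 2. -/
def IsCycleSet (C : Finset G.E) : Prop :=
  G.ConnSet C ∧ ∀ v ∈ G.supp C, G.degIn C v = 2

/-- `T` induces a tree. -/
def IsTreeSet (T : Finset G.E) : Prop := G.ConnSet T ∧ G.delta T = -1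

/-- The component of `v` in `(V, X)` is a tree (possibly a single vertex). -/
def IsTreeCompAt (X : Finset G.E) (v : G.V) : Prop :=
  (G.compEdges X v).card + 1 = (G.compVerts X v).card

/-- The number of tree components of the graph `(V, X)`. -/
noncomputable def treeCount (X : Finset G.E) : ℕ :=
  (((Finset.univ : Finset G.V).filter (fun v => G.IsTreeCompAt X v)).image
    (fun v => G.compVerts X v)).card

/-- The graph `G` has no isolated vertices. -/
def NoIso : Prop := ∀ v : G.V, ∃ e : G.E, v ∈ G.ends e

/-- The graph `G` has no leaves. -/
def NoLeaf : Prop := ∀ v : G.V, G.degIn Finset.univ v ≠ 1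

/-- The graph `G` is connected. -/
def GConn : Prop := Nonempty G.V ∧ ∀ u v : G.V, G.reachIn Finset.univ u v

/-- `G` is a bicycle: connected, leafless, with `Δ(G) = 1`. -/
def IsBicycle : Prop := G.GConn ∧ G.NoLeaf ∧ G.deltaG = 1

/-- One round of deleting all edges incident to a leaf. -/
noncomputable def pruneStep (X : Finset G.E) : Finset G.E :=
  X.filter (fun e => ∀ v ∈ G.ends e, G.degIn X v ≠ 1)

/-- Edge set obtained from `G` by repeatedly deleting leaves until none remain. -/
noncomputable def kernelSet : Finset G.E :=
  G.pruneStep^[Fintype.card G.E] Finset.univ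

/-- `Δ` of the component of `G` containing `v`. -/
noncomputable def compDelta (v : G.V) : ℤ :=
  ((G.compEdges Finset.univ v).card : ℤ) - ((G.compVerts Finset.univ v).card : ℤ)

/-- The core `[G]`: union of the kernels of the components `A` with `Δ(A) ≥ 1`. -/
noncomputable def coreSet : Finset G.E :=
  G.kernelSet.filter (fun e => ∀ v ∈ G.ends e, 1 ≤ G.compDelta v)

/-- `P` is the edge set of an `(x,y)`-path. -/
def IsPathSet (P : Finset G.E) (x y : G.V) : Prop :=
  G.ConnSet P ∧ x ≠ y ∧ x ∈ G.supp P ∧ y ∈ G.supp P ∧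
  G.degIn P x = 1 ∧ G.degIn P y = 1 ∧
  ∀ v ∈ G.supp P, v ≠ x → v ≠ y → G.degIn P v = 2

/-- `C` induces a bicycle subgraph: connected, leafless, `Δ = 1`. -/
def IsBicycleSet (C : Finset G.E) : Prop :=
  G.ConnSet C ∧ (∀ v ∈ G.supp C, G.degIn C v ≠ 1) ∧ G.delta C = 1

/-- Circuits of the `k`-circular matroid `M_k(G)`: minimal nonempty edge sets `C`
with `|C| = |V(G⟨C⟩)| + k`, i.e. `Δ(G⟨C⟩) = k`. -/
def IsCircuitSet (k : ℕ) (C : Finset G.E) : Prop :=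
  (C.Nonempty ∧ G.delta C = (k : ℤ)) ∧
  ∀ D ⊂ C, ¬ (D.Nonempty ∧ G.delta D = (k : ℤ))

/-- Independent sets of `M_k(G)`. -/
def Indep (k : ℕ) (I : Finset G.E) : Prop := ∀ C ⊆ I, ¬ G.IsCircuitSet k C

/-- Bases of `M_k(G)`: maximal independent sets. -/
def IsBase (k : ℕ) (B : Finset G.E) : Prop :=
  G.Indep k B ∧ ∀ B' : Finset G.E, G.Indep k B' → B ⊆ B' → B' = B

/-- The matroid `M_k(G)` is connected: at least two elements and every two
elements lie on a common circuit. -/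
def MConn (k : ℕ) : Prop :=
  2 ≤ Fintype.card G.E ∧
  ∀ a b : G.E, ∃ C : Finset G.E, G.IsCircuitSet k C ∧ a ∈ C ∧ b ∈ C

variable {G}

lemma exists_ends_eq (e : G.E) : ∃ a b, G.ends e = s(a, b) :=
  Sym2.ind (f := fun z => ∃ a b, z = s(a, b)) (fun a b => ⟨a, b, rfl⟩) _

lemma exists_ends_eq_of_mem {e : G.E} {v : G.V} (hv : v ∈ G.ends e) :
    ∃ w, G.ends e = s(v, w) := by
  obtain ⟨a, b, hab⟩ := exists_ends_eq e
  rw [hab, Sym2.mem_iff] at hv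
  rcases hv with rfl | rfl
  exacts [⟨b, hab⟩, ⟨a, hab.trans Sym2.eq_swap⟩]

section Reach

variable {X Y : Finset G.E} {u v w : G.V}

lemma adjIn_symm (h : G.adjIn X u v) : G.adjIn X v u :=
  let ⟨f, hf, hfe⟩ := h; ⟨f, hf, hfe.trans Sym2.eq_swap⟩

lemma reachIn_symm (h : G.reachIn X u v) : G.reachIn X v u :=
  (@Relation.ReflTransGen.stdSymm _ (G.adjIn X) ⟨fun _ _ => adjIn_symm⟩).symm _ _ h

lemma reachIn_trans (h : G.reachIn X u v) (h' : G.reachIn X v w) : G.reachIn X u w :=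
  Relation.ReflTransGen.trans h h'

lemma reachIn_mono (hXY : X ⊆ Y) : G.reachIn X u v → G.reachIn Y u v :=
  Relation.ReflTransGen.mono (r := G.adjIn X) (p := G.adjIn Y)
    (fun _ _ ⟨f, hf, hfe⟩ => ⟨f, hXY hf, hfe⟩) _ _

lemma reachIn_of_mem {f : G.E} (hf : f ∈ X) (hf' : G.ends f = s(u, v)) : G.reachIn X u v :=
  .single ⟨f, hf, hf'⟩

lemma exists_crossing_edge {S : Finset G.V} (hu : u ∈ S) (hv : v ∉ S) (h : G.reachIn X u v) :
    ∃ f ∈ X, ∃ a ∈ S, ∃ b ∉ S, G.ends f = s(a, b) := by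
  induction h with
  | refl => exact absurd hu hv
  | @tail b c _ hbc ih =>
      by_cases hb : b ∈ S
      · obtain ⟨f, hf, hfe⟩ := hbc
        exact ⟨f, hf, b, hb, c, hv, hfe⟩
      · exact ih hb

end Reach

section Components

variable {X : Finset G.E} {f : G.E} {u v w : G.V}

@[simp] lemma mem_compVerts : u ∈ G.compVerts X v ↔ G.reachIn X v u := by
  simp [compVerts]

lemma mem_compEdges :
    f ∈ G.compEdges X v ↔ f ∈ X ∧ ∃ u ∈ G.ends f, G.reachIn X v u := by
  simp [compEdges]

lemma self_mem_compVerts (v : G.V) : v ∈ G.compVerts X v :=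
  mem_compVerts.2 .refl

lemma mem_compEdges_of_mem_ends (hf : f ∈ X) (hv : v ∈ G.ends f) : f ∈ G.compEdges X v :=
  mem_compEdges.2 ⟨hf, v, hv, .refl⟩

lemma reachIn_of_mem_compEdges (hf : f ∈ G.compEdges X v) (hw : w ∈ G.ends f) :
    G.reachIn X v w := by
  obtain ⟨hfX, u, hu, hvu⟩ := mem_compEdges.1 hf
  obtain ⟨a, b, hab⟩ := exists_ends_eq f
  rw [hab, Sym2.mem_iff] at hu hw
  have hab' := reachIn_of_mem hfX hab
  rcases hu with rfl | rfl <;> rcases hw with rfl | rfl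
  exacts [hvu, hvu.trans hab', hvu.trans (reachIn_symm hab'), hvu]

lemma compVerts_eq_of_reachIn (h : G.reachIn X v w) : G.compVerts X v = G.compVerts X w := by
  ext u
  simp only [mem_compVerts]
  exact ⟨reachIn_trans (reachIn_symm h), reachIn_trans h⟩

lemma compEdges_eq_of_reachIn (h : G.reachIn X v w) : G.compEdges X v = G.compEdges X w := by
  ext f
  simp only [mem_compEdges, ← mem_compVerts, compVerts_eq_of_reachIn h]

-- Grow `S` along an edge leaving it: each new vertex brings a new edge, which is not in `Y`.
lemma card_compVerts_add_card_le {S : Finset G.V} {Y : Finset G.E} (hS : S.Nonempty)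
    (hSV : S ⊆ G.compVerts X v) (hYE : Y ⊆ G.compEdges X v)
    (hYS : ∀ f ∈ Y, ∀ w ∈ G.ends f, w ∈ S) :
    (G.compVerts X v).card + Y.card ≤ (G.compEdges X v).card + S.card := by
  by_cases hVS : G.compVerts X v ⊆ S
  · have := Finset.card_le_card hVS
    have := Finset.card_le_card hYE
    omega
  obtain ⟨x, hx, hxS⟩ := Finset.not_subset.1 hVS
  obtain ⟨s, hs⟩ := hS
  obtain ⟨f, hfX, a, ha, b, hb, hf⟩ := exists_crossing_edge hs hxS
    (reachIn_trans (reachIn_symm (mem_compVerts.1 (hSV hs))) (mem_compVerts.1 hx))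
  have hva : G.reachIn X v a := mem_compVerts.1 (hSV ha)
  have hbV : b ∈ G.compVerts X v := mem_compVerts.2 (hva.tail ⟨f, hfX, hf⟩)
  have hfE : f ∈ G.compEdges X v := mem_compEdges.2 ⟨hfX, a, hf ▸ Sym2.mem_mk_left _ _, hva⟩
  have hfY : f ∉ Y := fun hfY => hb (hYS f hfY b (hf ▸ Sym2.mem_mk_right _ _))
  have := card_compVerts_add_card_le (Finset.insert_nonempty b S)
    (Finset.insert_subset hbV hSV) (Finset.insert_subset hfE hYE) (by
      intro g hg w hw
      rcases Finset.mem_insert.1 hg with rfl | hg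
      · rw [hf, Sym2.mem_iff] at hw
        rcases hw with rfl | rfl
        exacts [Finset.mem_insert_of_mem ha, Finset.mem_insert_self _ _]
      · exact Finset.mem_insert_of_mem (hYS g hg w hw))
  rw [Finset.card_insert_of_notMem hfY, Finset.card_insert_of_notMem hb] at this
  omega
termination_by (G.compVerts X v \ S).card
decreasing_by
  rw [Finset.sdiff_insert]
  exact Finset.card_erase_lt_of_mem (Finset.mem_sdiff.2 ⟨hbV, hb⟩)

noncomputable def excess (X : Finset G.E) (v : G.V) : ℤ :=
  ((G.compEdges X v).card : ℤ) - (G.compVerts X v).card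

lemma compDelta_eq_excess (v : G.V) : G.compDelta v = G.excess Finset.univ v := rfl

lemma excess_eq_of_reachIn (h : G.reachIn X v w) : G.excess X v = G.excess X w := by
  rw [excess, excess, compVerts_eq_of_reachIn h, compEdges_eq_of_reachIn h]

lemma neg_one_le_excess (X : Finset G.E) (v : G.V) : -1 ≤ G.excess X v := by
  have := card_compVerts_add_card_le (X := X) (Finset.singleton_nonempty v)
    (Finset.singleton_subset_iff.2 (self_mem_compVerts v)) (Finset.empty_subset _) (by simp)
  simp only [Finset.card_empty, Finset.card_singleton] at this
  rw [excess]
  omega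

lemma isTreeCompAt_iff_excess : G.IsTreeCompAt X v ↔ G.excess X v = -1 := by
  rw [IsTreeCompAt, excess]
  omega

lemma isTreeCompAt_iff_excess_lt_zero : G.IsTreeCompAt X v ↔ G.excess X v < 0 := by
  have := neg_one_le_excess X v
  rw [isTreeCompAt_iff_excess]
  omega

end Components

section Erase

variable {X : Finset G.E} {e : G.E} {u₁ u₂ v w : G.V}

lemma reachIn_erase_or (he : G.ends e = s(u₁, u₂)) (h : G.reachIn X v w) :
    G.reachIn (X.erase e) v w ∨ G.reachIn (X.erase e) u₁ w ∨
      G.reachIn (X.erase e) u₂ w := by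
  induction h with
  | refl => exact .inl .refl
  | @tail b c _ hbc ih =>
      obtain ⟨f, hf, hfe⟩ := hbc
      by_cases hfe' : f = e
      · subst hfe'
        have hc : c ∈ G.ends f := hfe ▸ Sym2.mem_mk_right _ _
        rw [he, Sym2.mem_iff] at hc
        rcases hc with rfl | rfl
        exacts [.inr (.inl .refl), .inr (.inr .refl)]
      · have hbc : G.adjIn (X.erase e) b c := ⟨f, Finset.mem_erase.2 ⟨hfe', hf⟩, hfe⟩
        exact ih.imp (·.tail hbc) (Or.imp (·.tail hbc) (·.tail hbc))

lemma reachIn_erase_of_not_reachIn_ends (hav : ∀ u ∈ G.ends e, ¬ G.reachIn (X.erase e) v u)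
    (h : G.reachIn X v w) : G.reachIn (X.erase e) v w := by
  induction h with
  | refl => exact .refl
  | @tail b c _ hbc ih =>
      obtain ⟨f, hf, hfe⟩ := hbc
      have hfe' : f ≠ e := by
        rintro rfl
        exact hav b (hfe ▸ Sym2.mem_mk_left _ _) ih
      exact ih.tail ⟨f, Finset.mem_erase.2 ⟨hfe', hf⟩, hfe⟩

lemma compVerts_erase_of_not_reachIn_ends (hav : ∀ u ∈ G.ends e, ¬ G.reachIn (X.erase e) v u) :
    G.compVerts (X.erase e) v = G.compVerts X v := by
  ext w
  simp only [mem_compVerts]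
  exact ⟨reachIn_mono (Finset.erase_subset e X), reachIn_erase_of_not_reachIn_ends hav⟩

lemma compEdges_erase_of_not_reachIn_ends (hav : ∀ u ∈ G.ends e, ¬ G.reachIn (X.erase e) v u) :
    G.compEdges (X.erase e) v = G.compEdges X v := by
  ext f
  simp only [mem_compEdges, Finset.mem_erase]
  constructor
  · rintro ⟨⟨_, hf⟩, u, hu, hvu⟩
    exact ⟨hf, u, hu, reachIn_mono (Finset.erase_subset e X) hvu⟩
  · rintro ⟨hf, u, hu, hvu⟩
    have hvu := reachIn_erase_of_not_reachIn_ends hav hvu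
    refine ⟨⟨?_, hf⟩, u, hu, hvu⟩
    rintro rfl
    exact hav u hu hvu

lemma excess_erase_of_not_reachIn_ends (hav : ∀ u ∈ G.ends e, ¬ G.reachIn (X.erase e) v u) :
    G.excess (X.erase e) v = G.excess X v := by
  rw [excess, excess, compVerts_erase_of_not_reachIn_ends hav,
    compEdges_erase_of_not_reachIn_ends hav]

lemma reachIn_iff_reachIn_erase_or (he : G.ends e = s(u₁, u₂)) (heX : e ∈ X) :
    G.reachIn X u₁ w ↔ G.reachIn (X.erase e) u₁ w ∨ G.reachIn (X.erase e) u₂ w :=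
  ⟨fun h => (reachIn_erase_or he h).elim .inl id,
    fun h => h.elim (reachIn_mono (Finset.erase_subset e X))
      ((reachIn_of_mem heX he).trans <| reachIn_mono (Finset.erase_subset e X) ·)⟩

lemma compVerts_eq_union_compVerts_erase (he : G.ends e = s(u₁, u₂)) (heX : e ∈ X) :
    G.compVerts X u₁ = G.compVerts (X.erase e) u₁ ∪ G.compVerts (X.erase e) u₂ := by
  ext w
  simp only [Finset.mem_union, mem_compVerts, reachIn_iff_reachIn_erase_or he heX]

lemma compEdges_eq_insert_union_compEdges_erase (he : G.ends e = s(u₁, u₂)) (heX : e ∈ X) :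
    G.compEdges X u₁ =
      insert e (G.compEdges (X.erase e) u₁ ∪ G.compEdges (X.erase e) u₂) := by
  ext f
  by_cases hfe : f = e
  · subst hfe
    simpa using mem_compEdges_of_mem_ends heX (he ▸ Sym2.mem_mk_left _ _)
  · simp only [Finset.mem_insert, hfe, false_or, Finset.mem_union, mem_compEdges,
      Finset.mem_erase, ne_eq, not_false_eq_true, true_and, reachIn_iff_reachIn_erase_or he heX]
    constructor
    · rintro ⟨hf, u, hu, h | h⟩
      exacts [.inl ⟨hf, u, hu, h⟩, .inr ⟨hf, u, hu, h⟩]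
    · rintro (⟨hf, u, hu, h⟩ | ⟨hf, u, hu, h⟩)
      exacts [⟨hf, u, hu, .inl h⟩, ⟨hf, u, hu, .inr h⟩]

lemma notMem_compEdges_erase (e : G.E) (v : G.V) : e ∉ G.compEdges (X.erase e) v := by
  simp [mem_compEdges]

lemma excess_erase_of_reachIn (he : G.ends e = s(u₁, u₂)) (heX : e ∈ X)
    (hc : G.reachIn (X.erase e) u₁ u₂) : G.excess (X.erase e) u₁ = G.excess X u₁ - 1 := by
  rw [excess, excess, compVerts_eq_union_compVerts_erase he heX,
    compEdges_eq_insert_union_compEdges_erase he heX, ← compVerts_eq_of_reachIn hc,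
    ← compEdges_eq_of_reachIn hc, Finset.union_self, Finset.union_self,
    Finset.card_insert_of_notMem (notMem_compEdges_erase e u₁)]
  push_cast
  ring

lemma excess_eq_excess_erase_add_excess_erase (he : G.ends e = s(u₁, u₂)) (heX : e ∈ X)
    (hnc : ¬ G.reachIn (X.erase e) u₁ u₂) :
    G.excess X u₁ = G.excess (X.erase e) u₁ + G.excess (X.erase e) u₂ + 1 := by
  have hdisj : ∀ w, G.reachIn (X.erase e) u₁ w → ¬ G.reachIn (X.erase e) u₂ w :=
    fun w h₁ h₂ => hnc (h₁.trans (reachIn_symm h₂))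
  have hVd : Disjoint (G.compVerts (X.erase e) u₁) (G.compVerts (X.erase e) u₂) :=
    Finset.disjoint_left.2 fun w h₁ h₂ => hdisj w (mem_compVerts.1 h₁) (mem_compVerts.1 h₂)
  have hEd : Disjoint (G.compEdges (X.erase e) u₁) (G.compEdges (X.erase e) u₂) :=
    Finset.disjoint_left.2 fun f h₁ h₂ => by
      obtain ⟨-, u, hu, h⟩ := mem_compEdges.1 h₁
      exact hdisj u h (reachIn_of_mem_compEdges h₂ hu)
  have heE : e ∉ G.compEdges (X.erase e) u₁ ∪ G.compEdges (X.erase e) u₂ := by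
    simp [notMem_compEdges_erase]
  rw [excess, excess, excess, compVerts_eq_union_compVerts_erase he heX,
    compEdges_eq_insert_union_compEdges_erase he heX, Finset.card_insert_of_notMem heE,
    Finset.card_union_of_disjoint hVd, Finset.card_union_of_disjoint hEd]
  push_cast
  ring

end Erase

section Degree

noncomputable def incidence (e : G.E) (v : G.V) : ℕ :=
  if G.ends e = s(v, v) then 2 else if v ∈ G.ends e then 1 else 0

variable {X Y : Finset G.E} {e f : G.E} {u v w : G.V}

lemma degIn_eq_sum_incidence : G.degIn X v = ∑ e ∈ X, G.incidence e v := rfl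

lemma incidence_eq (he : G.ends e = s(u, w)) (v : G.V) :
    G.incidence e v = (if u = v then 1 else 0) + (if w = v then 1 else 0) := by
  rw [incidence, he]
  by_cases hu : u = v <;> by_cases hw : w = v <;> subst_vars <;> simp [*, eq_comm]

lemma incidence_eq_zero (hv : v ∉ G.ends e) : G.incidence e v = 0 := by
  obtain ⟨a, b, he⟩ := exists_ends_eq e
  rw [he, Sym2.mem_iff, not_or] at hv
  simp [incidence_eq he, Ne.symm hv.1, Ne.symm hv.2]

lemma one_le_incidence (hv : v ∈ G.ends e) : 1 ≤ G.incidence e v := by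
  obtain ⟨a, b, he⟩ := exists_ends_eq e
  rw [he, Sym2.mem_iff] at hv
  rw [incidence_eq he]
  rcases hv with rfl | rfl <;> simp

lemma incidence_eq_one (he : G.ends e = s(u, w)) (huw : u ≠ w) : G.incidence e u = 1 := by
  simp [incidence_eq he, Ne.symm huw]

lemma sum_incidence (e : G.E) : ∑ v, G.incidence e v = 2 := by
  obtain ⟨a, b, he⟩ := exists_ends_eq e
  simp [incidence_eq he, Finset.sum_add_distrib]

lemma sum_degIn (Y : Finset G.E) : ∑ v, G.degIn Y v = 2 * Y.card := by
  simp only [degIn_eq_sum_incidence]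
  rw [Finset.sum_comm, Finset.sum_congr rfl fun e _ => sum_incidence e, Finset.sum_const,
    smul_eq_mul, mul_comm]

lemma incidence_le_degIn (he : e ∈ Y) (v : G.V) : G.incidence e v ≤ G.degIn Y v :=
  Finset.single_le_sum (f := (G.incidence · v)) (fun _ _ => Nat.zero_le _) he

lemma one_le_degIn (hf : f ∈ Y) (hv : v ∈ G.ends f) : 1 ≤ G.degIn Y v :=
  (one_le_incidence hv).trans (incidence_le_degIn hf v)

lemma degIn_mono (h : X ⊆ Y) (v : G.V) : G.degIn X v ≤ G.degIn Y v :=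
  Finset.sum_le_sum_of_subset h

lemma degIn_erase_add_incidence (he : e ∈ Y) (v : G.V) :
    G.degIn (Y.erase e) v + G.incidence e v = G.degIn Y v :=
  Finset.sum_erase_add _ _ he

lemma degIn_eq_of_subset (hXY : X ⊆ Y) (hY : ∀ f ∈ Y, v ∈ G.ends f → f ∈ X) :
    G.degIn X v = G.degIn Y v :=
  Finset.sum_subset hXY fun f hf hfX => incidence_eq_zero fun hv => hfX (hY f hf hv)

lemma exists_mem_ends_of_degIn_pos (h : 0 < G.degIn Y v) : ∃ f ∈ Y, v ∈ G.ends f := by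
  by_contra! hv
  rw [degIn_eq_sum_incidence, Finset.sum_eq_zero fun f hf => incidence_eq_zero (hv f hf)] at h
  exact h.false

lemma card_supp_le_card (hu : u ∈ G.supp Y)
    (hdeg : ∀ w ∈ G.supp Y, w ≠ u → 2 ≤ G.degIn Y w) :
    (G.supp Y).card ≤ Y.card := by
  have hsum : ∑ v ∈ G.supp Y, G.degIn Y v = 2 * Y.card := by
    rw [← sum_degIn, Finset.sum_subset (Finset.subset_univ _)]
    intro v _ hv
    rw [degIn_eq_sum_incidence, Finset.sum_eq_zero]
    exact fun f hf => incidence_eq_zero fun hvf => hv (by simpa [supp] using ⟨f, hf, hvf⟩)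
  have hrest : 2 * ((G.supp Y).erase u).card ≤ ∑ v ∈ (G.supp Y).erase u, G.degIn Y v := by
    rw [mul_comm, ← smul_eq_mul, ← Finset.sum_const]
    exact Finset.sum_le_sum fun w hw =>
      hdeg w (Finset.mem_of_mem_erase hw) (Finset.ne_of_mem_erase hw)
  have hu' : 1 ≤ G.degIn Y u := by
    obtain ⟨f, hf, hvf⟩ := by simpa [supp] using hu
    exact one_le_degIn hf hvf
  rw [← Finset.sum_erase_add _ _ hu] at hsum
  have := Finset.card_erase_add_one hu
  omega

end Degree

lemma _root_.Finset.iterate_eq_of_card_le {α : Type*} {f : Finset α → Finset α}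
    (hf : ∀ s, f s ⊆ s) (s : Finset α) {n : ℕ} (hn : s.card ≤ n) :
    f (f^[n] s) = f^[n] s := by
  induction s using Finset.strongInduction generalizing n with
  | H s ih =>
    by_cases hs : f s = s
    · rw [Function.iterate_fixed hs, hs]
    have hlt := Finset.ssubset_iff_subset_ne.2 ⟨hf s, hs⟩
    have hcard := Finset.card_lt_card hlt
    obtain ⟨m, rfl⟩ : ∃ m, n = m + 1 := ⟨n - 1, by omega⟩
    rw [Function.iterate_succ_apply]
    exact ih _ hlt (by omega)

section Kernel

variable {X Y : Finset G.E} {e : G.E}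

def IsLeaflessSet (Y : Finset G.E) : Prop :=
  ∀ f ∈ Y, ∀ v ∈ G.ends f, G.degIn Y v ≠ 1

lemma isLeaflessSet_iff_pruneStep_eq : G.IsLeaflessSet Y ↔ G.pruneStep Y = Y :=
  Finset.filter_eq_self.symm

lemma IsLeaflessSet.two_le_degIn (hY : G.IsLeaflessSet Y) {f : G.E} (hf : f ∈ Y) {v : G.V}
    (hv : v ∈ G.ends f) : 2 ≤ G.degIn Y v := by
  have := one_le_degIn hf hv
  have := hY f hf v hv
  omega

lemma IsLeaflessSet.subset_pruneStep (hY : G.IsLeaflessSet Y) (hYX : Y ⊆ X) :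
    Y ⊆ G.pruneStep X := fun f hf =>
  Finset.mem_filter.2 ⟨hYX hf, fun v hv h1 => by
    have := (hY.two_le_degIn hf hv).trans (degIn_mono hYX v)
    omega⟩

lemma IsLeaflessSet.subset_kernelSet (hY : G.IsLeaflessSet Y) : Y ⊆ G.kernelSet := by
  suffices ∀ n, Y ⊆ G.pruneStep^[n] Finset.univ from this _
  intro n
  induction n with
  | zero => exact Finset.subset_univ Y
  | succ n ih =>
    rw [Function.iterate_succ_apply']
    exact hY.subset_pruneStep ih

lemma isLeaflessSet_kernelSet : G.IsLeaflessSet G.kernelSet :=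
  isLeaflessSet_iff_pruneStep_eq.2 <|
    Finset.iterate_eq_of_card_le (fun _ => Finset.filter_subset _ _) _ Finset.card_univ.le

lemma mem_kernelSet_iff : e ∈ G.kernelSet ↔ ∃ Y, G.IsLeaflessSet Y ∧ e ∈ Y :=
  ⟨fun he => ⟨_, isLeaflessSet_kernelSet, he⟩,
    fun ⟨_, hY, he⟩ => hY.subset_kernelSet he⟩

end Kernel

section Leafless

variable {X K Z : Finset G.E} {e g : G.E} {u u₁ u₂ v w w₀ : G.V}

lemma eq_of_reachIn_of_isolated (hv : ∀ f ∈ X, v ∉ G.ends f) (h : G.reachIn X v w) :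
    w = v := by
  rcases Relation.ReflTransGen.cases_head h with rfl | ⟨c, ⟨f, hf, hfe⟩, _⟩
  · rfl
  · exact absurd (hfe ▸ Sym2.mem_mk_left _ _) (hv f hf)

lemma isTreeCompAt_of_isolated (hv : ∀ f ∈ X, v ∉ G.ends f) : G.IsTreeCompAt X v := by
  have hV : G.compVerts X v = {v} := by
    ext w
    rw [mem_compVerts, Finset.mem_singleton]
    exact ⟨eq_of_reachIn_of_isolated hv, fun h => h ▸ .refl⟩
  have hE : G.compEdges X v = ∅ := by
    refine Finset.eq_empty_of_forall_notMem fun f hf => ?_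
    obtain ⟨hfX, u, hu, hvu⟩ := mem_compEdges.1 hf
    exact hv f hfX (eq_of_reachIn_of_isolated hv hvu ▸ hu)
  simp [IsTreeCompAt, hV, hE]

lemma exists_pendant_of_not_isLeaflessSet (hZ : ¬ G.IsLeaflessSet Z) :
    ∃ g ∈ Z, ∃ v w₀,
      G.ends g = s(v, w₀) ∧ v ≠ w₀ ∧ ∀ f ∈ Z, v ∈ G.ends f → f = g := by
  simp only [IsLeaflessSet, not_forall, not_not] at hZ
  obtain ⟨g, hg, v, hv, hdeg⟩ := hZ
  have hsplit := degIn_erase_add_incidence hg v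
  have hinc := one_le_incidence hv
  obtain ⟨w₀, hgw⟩ := exists_ends_eq_of_mem hv
  refine ⟨g, hg, v, w₀, hgw, fun hvw => ?_, fun f hf hvf => ?_⟩
  · rw [incidence_eq hgw, ← hvw, if_pos rfl] at hsplit
    omega
  · by_contra hfg
    have := one_le_degIn (Finset.mem_erase.2 ⟨hfg, hf⟩) hvf
    omega

lemma excess_erase_of_pendant (hgZ : g ∈ Z) (hg : G.ends g = s(v, w₀)) (hvw : v ≠ w₀)
    (honly : ∀ f ∈ Z, v ∈ G.ends f → f = g) (huv : u ≠ v) :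
    G.excess (Z.erase g) u = G.excess Z u := by
  have hiso : ∀ f ∈ Z.erase g, v ∉ G.ends f := fun f hf hvf =>
    Finset.ne_of_mem_erase hf (honly f (Finset.mem_of_mem_erase hf) hvf)
  have hnc : ¬ G.reachIn (Z.erase g) w₀ v := fun h =>
    hvw (eq_of_reachIn_of_isolated hiso (reachIn_symm h)).symm
  have hw₀ := excess_eq_excess_erase_add_excess_erase (hg.trans Sym2.eq_swap) hgZ hnc
  rw [isTreeCompAt_iff_excess.1 (isTreeCompAt_of_isolated hiso)] at hw₀
  by_cases huw : G.reachIn (Z.erase g) u w₀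
  · rw [excess_eq_of_reachIn huw,
      excess_eq_of_reachIn (reachIn_mono (Finset.erase_subset g Z) huw)]
    omega
  · refine excess_erase_of_not_reachIn_ends fun x hx hux => ?_
    rw [hg, Sym2.mem_iff] at hx
    rcases hx with rfl | rfl
    exacts [huv (eq_of_reachIn_of_isolated hiso (reachIn_symm hux)), huw hux]

lemma exists_isLeaflessSet_of_not_isTreeCompAt (heZ : e ∈ Z)
    (h : ∀ u ∈ G.ends e, ¬ G.IsTreeCompAt (Z.erase e) u) :
    ∃ Y, G.IsLeaflessSet Y ∧ e ∈ Y := by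
  induction Z using Finset.strongInduction with
  | H Z ih =>
    by_cases hZ : G.IsLeaflessSet Z
    · exact ⟨Z, hZ, heZ⟩
    obtain ⟨g, hgZ, v, w₀, hg, hvw, honly⟩ := exists_pendant_of_not_isLeaflessSet hZ
    have hve : v ∉ G.ends e := fun hv => by
      obtain rfl := honly e heZ hv
      exact h v hv (isTreeCompAt_of_isolated fun f hf hvf =>
        Finset.ne_of_mem_erase hf (honly f (Finset.mem_of_mem_erase hf) hvf))
    have hge : g ≠ e := by
      rintro rfl
      exact hve (hg ▸ Sym2.mem_mk_left _ _)
    refine ih _ (Finset.erase_ssubset hgZ) (Finset.mem_erase.2 ⟨hge.symm, heZ⟩) fun u hu => ?_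
    rw [Finset.erase_right_comm, isTreeCompAt_iff_excess,
      excess_erase_of_pendant (Finset.mem_erase.2 ⟨hge, hgZ⟩) hg hvw
        (fun f hf => honly f (Finset.mem_of_mem_erase hf)) (fun huv => hve (huv ▸ hu)),
      ← isTreeCompAt_iff_excess]
    exact h u hu

lemma IsLeaflessSet.not_isTreeCompAt_erase (hK : G.IsLeaflessSet K) (heK : e ∈ K) (hKX : K ⊆ X)
    (he : G.ends e = s(u₁, u₂)) (hnc : ¬ G.reachIn (X.erase e) u₁ u₂) :
    ¬ G.IsTreeCompAt (X.erase e) u₁ := by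
  set Y := K.erase e ∩ G.compEdges (X.erase e) u₁
  have hYdeg : ∀ w ∈ G.compVerts (X.erase e) u₁, G.degIn Y w = G.degIn (K.erase e) w :=
    fun w hw => degIn_eq_of_subset Finset.inter_subset_left fun f hf hwf =>
      Finset.mem_inter.2 ⟨hf, mem_compEdges.2 ⟨Finset.erase_subset_erase e hKX hf, w, hwf,
        mem_compVerts.1 hw⟩⟩
  have hsupp : G.supp Y ⊆ G.compVerts (X.erase e) u₁ := fun w hw => by
    obtain ⟨f, hf, hwf⟩ := by simpa [supp] using hw
    exact mem_compVerts.2 (reachIn_of_mem_compEdges (Finset.mem_inter.1 hf).2 hwf)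
  have hu₁ : 1 ≤ G.degIn Y u₁ := by
    have h2 := hK.two_le_degIn heK (he ▸ Sym2.mem_mk_left _ _)
    have := degIn_erase_add_incidence heK u₁
    have := incidence_eq_one he fun h => hnc (h ▸ .refl)
    rw [hYdeg u₁ (self_mem_compVerts u₁)]
    omega
  have hu₁Y : u₁ ∈ G.supp Y := by
    obtain ⟨f, hf, hu₁f⟩ := exists_mem_ends_of_degIn_pos hu₁
    simpa [supp] using ⟨f, hf, hu₁f⟩
  have hcard : (G.supp Y).card ≤ Y.card := card_supp_le_card hu₁Y fun w hw hwu₁ => by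
    have hwe : w ∉ G.ends e := by
      rw [he, Sym2.mem_iff]
      rintro (rfl | rfl)
      exacts [hwu₁ rfl, hnc (mem_compVerts.1 (hsupp hw))]
    obtain ⟨f, hf, hwf⟩ := by simpa [supp] using hw
    have := degIn_erase_add_incidence heK w
    have := hK.two_le_degIn (Finset.mem_of_mem_erase (Finset.mem_inter.1 hf).1) hwf
    rw [hYdeg w (hsupp hw)]
    rw [incidence_eq_zero hwe] at *
    omega
  have := card_compVerts_add_card_le (Y := Y) ⟨u₁, hu₁Y⟩ hsupp Finset.inter_subset_right
    fun f hf w hw => by simpa [supp] using ⟨f, hf, hw⟩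
  rw [isTreeCompAt_iff_excess, excess]
  omega

end Leafless

section Core

variable {X : Finset G.E} {e : G.E} {u₁ u₂ : G.V}

lemma one_le_excess_of_not_isTreeCompAt_erase (he : G.ends e = s(u₁, u₂)) (heX : e ∈ X)
    (h₁ : ¬ G.IsTreeCompAt (X.erase e) u₁) (h₂ : ¬ G.IsTreeCompAt (X.erase e) u₂) :
    1 ≤ G.excess X u₁ := by
  rw [isTreeCompAt_iff_excess_lt_zero, not_lt] at h₁ h₂
  by_cases hc : G.reachIn (X.erase e) u₁ u₂
  · have := excess_erase_of_reachIn he heX hc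
    omega
  · have := excess_eq_excess_erase_add_excess_erase he heX hc
    omega

lemma not_isTreeCompAt_erase_of_mem_coreSet (he : G.ends e = s(u₁, u₂))
    (hcore : e ∈ G.coreSet) :
    ¬ G.IsTreeCompAt (Finset.univ.erase e) u₁ := by
  obtain ⟨heK, hΔ⟩ := Finset.mem_filter.1 hcore
  by_cases hc : G.reachIn (Finset.univ.erase e) u₁ u₂
  · have := excess_erase_of_reachIn he (Finset.mem_univ e) hc
    have := hΔ u₁ (he ▸ Sym2.mem_mk_left _ _)
    rw [compDelta_eq_excess] at this
    rw [isTreeCompAt_iff_excess]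
    omega
  · exact isLeaflessSet_kernelSet.not_isTreeCompAt_erase heK (Finset.subset_univ _) he hc

lemma mem_coreSet_iff :
    e ∈ G.coreSet ↔ ∀ u ∈ G.ends e, ¬ G.IsTreeCompAt (Finset.univ.erase e) u := by
  obtain ⟨u₁, u₂, he⟩ := exists_ends_eq e
  refine ⟨fun h => ?_, fun h => Finset.mem_filter.2 ⟨?_, ?_⟩⟩
  · rw [he, Sym2.forall_mem_pair]
    exact ⟨not_isTreeCompAt_erase_of_mem_coreSet he h,
      not_isTreeCompAt_erase_of_mem_coreSet (he.trans Sym2.eq_swap) h⟩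
  · exact mem_kernelSet_iff.2 (exists_isLeaflessSet_of_not_isTreeCompAt (Finset.mem_univ e) h)
  · rw [he, Sym2.forall_mem_pair] at h ⊢
    have h₁ := one_le_excess_of_not_isTreeCompAt_erase he (Finset.mem_univ e) h.1 h.2
    rw [compDelta_eq_excess, compDelta_eq_excess,
      ← excess_eq_of_reachIn (reachIn_of_mem (Finset.mem_univ e) he)]
    exact ⟨h₁, h₁⟩

end Core

section TreeCount

noncomputable def treeComps (X : Finset G.E) : Finset (Finset G.V) :=
  (Finset.univ.filter (G.IsTreeCompAt X)).image (G.compVerts X)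

variable {X : Finset G.E} {e : G.E} {S : Finset G.V} {u u₁ u₂ v w : G.V}

lemma treeCount_eq_card_treeComps : G.treeCount X = (G.treeComps X).card := rfl

lemma mem_treeComps :
    S ∈ G.treeComps X ↔ ∃ v, G.IsTreeCompAt X v ∧ G.compVerts X v = S := by
  simp [treeComps]

lemma compVerts_mem_treeComps (h : G.IsTreeCompAt X v) : G.compVerts X v ∈ G.treeComps X :=
  mem_treeComps.2 ⟨v, h, rfl⟩

lemma isTreeCompAt_congr (h : G.reachIn X v w) : G.IsTreeCompAt X v ↔ G.IsTreeCompAt X w := by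
  rw [isTreeCompAt_iff_excess, isTreeCompAt_iff_excess, excess_eq_of_reachIn h]

lemma eq_compVerts_of_mem_treeComps (hS : S ∈ G.treeComps X) (hu : u ∈ S) :
    S = G.compVerts X u ∧ G.IsTreeCompAt X u := by
  obtain ⟨v, hv, rfl⟩ := mem_treeComps.1 hS
  have hvu := mem_compVerts.1 hu
  exact ⟨compVerts_eq_of_reachIn hvu, (isTreeCompAt_congr hvu).1 hv⟩

lemma mem_treeComps_erase_iff (hS : ∀ u ∈ G.ends e, u ∉ S) :
    S ∈ G.treeComps (X.erase e) ↔ S ∈ G.treeComps X := by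
  have key : ∀ v, (∀ u ∈ G.ends e, ¬ G.reachIn (X.erase e) v u) →
      (G.IsTreeCompAt (X.erase e) v ↔ G.IsTreeCompAt X v) ∧
        G.compVerts (X.erase e) v = G.compVerts X v := fun v hav =>
    ⟨by rw [isTreeCompAt_iff_excess, isTreeCompAt_iff_excess,
      excess_erase_of_not_reachIn_ends hav], compVerts_erase_of_not_reachIn_ends hav⟩
  simp only [mem_treeComps]
  constructor
  · rintro ⟨v, hv, rfl⟩
    obtain ⟨htree, hV⟩ := key v fun u hu h => hS u hu (mem_compVerts.2 h)
    exact ⟨v, htree.1 hv, hV.symm⟩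
  · rintro ⟨v, hv, rfl⟩
    obtain ⟨htree, hV⟩ := key v fun u hu h =>
      hS u hu (mem_compVerts.2 (reachIn_mono (Finset.erase_subset e X) h))
    exact ⟨v, htree.2 hv, hV⟩

lemma treeComps_erase_subset (h : ∀ u ∈ G.ends e, ¬ G.IsTreeCompAt (X.erase e) u) :
    G.treeComps (X.erase e) ⊆ G.treeComps X := fun _ hS =>
  (mem_treeComps_erase_iff fun u hu huS =>
    h u hu (eq_compVerts_of_mem_treeComps hS huS).2).1 hS

lemma treeCount_lt_of_not_isTreeCompAt (heX : e ∈ X) (hu : u ∈ G.ends e)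
    (hX : ¬ G.IsTreeCompAt X u) (hX' : G.IsTreeCompAt (X.erase e) u) :
    G.treeCount X < G.treeCount (X.erase e) := by
  have hsub : G.treeComps X ⊆ G.treeComps (X.erase e) := fun S hS =>
    (mem_treeComps_erase_iff fun w hw hwS => hX <| (isTreeCompAt_congr
      (reachIn_of_mem_compEdges (mem_compEdges_of_mem_ends heX hw) hu)).1
        (eq_compVerts_of_mem_treeComps hS hwS).2).2 hS
  refine Finset.card_lt_card (Finset.ssubset_iff_of_subset hsub |>.2
    ⟨_, compVerts_mem_treeComps hX', fun h => hX ?_⟩)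
  exact (eq_compVerts_of_mem_treeComps h (self_mem_compVerts u)).2

lemma treeCount_lt_of_isTreeCompAt (he : G.ends e = s(u₁, u₂)) (heX : e ∈ X)
    (hX : G.IsTreeCompAt X u₁) : G.treeCount X < G.treeCount (X.erase e) := by
  rw [isTreeCompAt_iff_excess] at hX
  have hnc : ¬ G.reachIn (X.erase e) u₁ u₂ := fun hc => by
    have := excess_erase_of_reachIn he heX hc
    have := neg_one_le_excess (X.erase e) u₁
    omega
  have hsum := excess_eq_excess_erase_add_excess_erase he heX hnc
  have h₁ := neg_one_le_excess (X.erase e) u₁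
  have h₂ := neg_one_le_excess (X.erase e) u₂
  have hC₁ : G.compVerts (X.erase e) u₁ ∈ G.treeComps (X.erase e) :=
    compVerts_mem_treeComps (isTreeCompAt_iff_excess.2 (by omega))
  have hC₂ : G.compVerts (X.erase e) u₂ ∈ G.treeComps (X.erase e) :=
    compVerts_mem_treeComps (isTreeCompAt_iff_excess.2 (by omega))
  have hu₁ : u₁ ∉ G.compVerts (X.erase e) u₂ := fun h =>
    hnc (reachIn_symm (mem_compVerts.1 h))
  have hC₂' : G.compVerts (X.erase e) u₂ ∈ (G.treeComps (X.erase e)).erase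
      (G.compVerts (X.erase e) u₁) :=
    Finset.mem_erase.2 ⟨fun h => hu₁ (h ▸ self_mem_compVerts u₁), hC₂⟩
  have hsub : (G.treeComps X).erase (G.compVerts X u₁) ⊆
      ((G.treeComps (X.erase e)).erase (G.compVerts (X.erase e) u₁)).erase
        (G.compVerts (X.erase e) u₂) := by
    intro S hS
    obtain ⟨hSA, hS⟩ := Finset.mem_erase.1 hS
    have hends : ∀ w ∈ G.ends e, w ∉ S := fun w hw hwS => hSA <|
      (eq_compVerts_of_mem_treeComps hS hwS).1.trans (compVerts_eq_of_reachIn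
        (reachIn_of_mem_compEdges (mem_compEdges_of_mem_ends heX hw) (he ▸ Sym2.mem_mk_left _ _)))
    have hS' := (mem_treeComps_erase_iff hends).2 hS
    refine Finset.mem_erase.2 ⟨?_, Finset.mem_erase.2 ⟨?_, hS'⟩⟩
    · rintro rfl
      exact hends u₂ (he ▸ Sym2.mem_mk_right _ _) (self_mem_compVerts u₂)
    · rintro rfl
      exact hends u₁ (he ▸ Sym2.mem_mk_left _ _) (self_mem_compVerts u₁)
  have := Finset.card_le_card hsub
  have := Finset.pred_card_le_card_erase (s := G.treeComps X) (a := G.compVerts X u₁)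
  have := Finset.card_erase_add_one hC₁
  have := Finset.card_erase_add_one hC₂'
  rw [treeCount_eq_card_treeComps, treeCount_eq_card_treeComps]
  omega

lemma treeCount_lt_treeCount_erase_iff (heX : e ∈ X) :
    G.treeCount X < G.treeCount (X.erase e) ↔
      ∃ u ∈ G.ends e, G.IsTreeCompAt (X.erase e) u := by
  refine ⟨fun hlt => ?_, fun ⟨u, hu, hX'⟩ => ?_⟩
  · by_contra! h
    exact (Finset.card_le_card (treeComps_erase_subset h)).not_gt hlt
  · by_cases hX : G.IsTreeCompAt X u
    · obtain ⟨w, he⟩ := exists_ends_eq_of_mem hu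
      exact treeCount_lt_of_isTreeCompAt he heX hX
    · exact treeCount_lt_of_not_isTreeCompAt heX hu hX hX'

end TreeCount

end Multigraph

theorem stmt_14_general (G : Multigraph) :
    ∀ e : G.E, e ∈ G.coreSet ↔
      ¬ (G.treeCount Finset.univ < G.treeCount (Finset.univ.erase e)) := by
  intro e
  rw [Multigraph.mem_coreSet_iff,
    Multigraph.treeCount_lt_treeCount_erase_iff (Finset.mem_univ e)]
  push Not
  rfl

/-- For a graph with a component having at least two cycles, an edge belongs to
the core `[G]` iff deleting it does not increase the number of tree
components. -/
theorem stmt_14 (G : Multigraph) (hni : G.NoIso)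
    (h2 : ∃ v : G.V, 1 ≤ G.compDelta v) :
    ∀ e : G.E, e ∈ G.coreSet ↔
      ¬ (G.treeCount Finset.univ < G.treeCount (Finset.univ.erase e)) :=
  stmt_14_general G
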